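/- Let k ≥ 1. Then for all m ≥ 0, all 0 ≤ j ≤ k-1, and all s ≥ 0, the number Q_{km+j,s}^{kℕ} of permutations of {1,…,km+j} with exactly s descents whose bottom is divisible by k satisfies: Q_{km+j,s}^{kℕ} = ((k-1)m+j)! · Σ_{r=0}^{s} (-1)^{s-r} · C((k-1)m+j+r, r) · C(km+j+1, s-r) · Π_{i=1}^{m} (1+r+(k-1)i), and also Q_{km+j,s}^{kℕ} = ((k-1)m+j)! · Σ_{r=0}^{m-s} (-1)^{m-s-r} · C((k-1)m+j+r, r) · C(km+j+1, m-s-r) · Π_{i=0}^{m-1} (r+j+(k-1)i). -/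

import Mathlib

open scoped Classical
open Finset

/-- Number of `X,Y`-descents of the word `w = w_1 ⋯ w_n` (indices `i` with
`w_i > w_{i+1}`, `w_i ∈ X`, `w_{i+1} ∈ Y`). -/
noncomputable def desXY (X Y : Set ℕ) {n : ℕ} (w : Fin n → ℕ) : ℕ :=
  (Finset.univ.filter (fun i : Fin n =>
    ∃ h : i.1 + 1 < n, w i > w ⟨i.1 + 1, h⟩ ∧ w i ∈ X ∧ w ⟨i.1 + 1, h⟩ ∈ Y)).card

/-- `permCount X Y n s` is the number of permutations `σ` of `{1,…,n}` with
exactly `s` `X,Y`-descents. -/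
noncomputable def permCount (X Y : Set ℕ) (n s : ℕ) : ℕ :=
  (Finset.univ.filter (fun σ : Equiv.Perm (Fin n) =>
    desXY X Y (fun i => (σ i : ℕ) + 1) = s)).card

/-- `α_{S,n,j} = |{x : j < x ≤ n, x ∉ S}|`. -/
noncomputable def alphaSet (S : Set ℕ) (n j : ℕ) : ℕ :=
  ((Finset.Ioc j n).filter (fun x => x ∉ S)).card

/-- `β_{S,n,j} = |{x : 1 ≤ x < j, x ∉ S}|`. -/
noncomputable def betaSet (S : Set ℕ) (j : ℕ) : ℕ :=
  ((Finset.Ico 1 j).filter (fun x => x ∉ S)).card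

/-!
Inserting the largest letter `n + 1` into a permutation of `[n]` at one of its `n + 1` slots adds
a `Y`-descent exactly when the letter after the slot lies in `Y` and is not already the bottom of a
descent. With `K = |Y ∩ [n]|` and `d` descents there are `K - d` such slots, so
`Q(n+1, s) = (n + 1 - K + s) Q(n, s) + (K + 1 - s) Q(n, s - 1)`.
For `F_n(t) = ∑ₛ Q(n, s) tˢ` this recursion says `F_n(t) = (1 - t)^(n+1) ∑ᵣ P_n(r) tʳ`
with `P_{n+1}(r) = (1 + r + β_{n+1}) P_n(r)`, which is the first formula for an arbitrary `Y`.
The second one is the same statement for `t^K F_n(1/t)`, whose polynomial changes by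
`R_{n+1}(r) = r R_n(r)` when `n + 1 ∈ Y` and by `R_{n+1}(r) = (r + 1) R_n(r + 1)` otherwise.
For `Y = kℕ` both products have the closed forms of the theorem.
-/

/-- The coefficient of `t ^ u` in `(1 - t) ^ N * ∑ r, f r * t ^ r`. -/
def altChooseSum (N : ℕ) (f : ℕ → ℤ) (u : ℕ) : ℤ :=
  ∑ x ∈ antidiagonal u, (-1) ^ x.2 * (N.choose x.2 : ℤ) * f x.1

lemma altChooseSum_eq_sum_range (N : ℕ) (f : ℕ → ℤ) (u : ℕ) :
    altChooseSum N f u = ∑ r ∈ range (u + 1), (-1) ^ (u - r) * (N.choose (u - r) : ℤ) * f r :=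
  Nat.sum_antidiagonal_eq_sum_range_succ (fun r e => (-1) ^ e * (N.choose e : ℤ) * f r) u

lemma altChooseSum_zero (N : ℕ) (f : ℕ → ℤ) : altChooseSum N f 0 = f 0 := by
  simp [altChooseSum]

lemma Nat.cast_succ_mul_choose_succ (N e : ℕ) :
    ((e : ℤ) + 1) * (N.choose (e + 1) : ℤ) = ((N : ℤ) - e) * (N.choose e : ℤ) := by
  rcases le_or_gt e N with h | h
  · have := Nat.choose_succ_right_eq N e
    zify [h] at this
    linarith
  · simp [Nat.choose_eq_zero_of_lt h, Nat.choose_eq_zero_of_lt (Nat.lt_succ_of_lt h)]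

lemma altChooseSum_succ_mul (N : ℕ) (c : ℤ) (f : ℕ → ℤ) (s : ℕ) :
    altChooseSum (N + 1) (fun r => (c + r) * f r) (s + 1) =
      (c + s + 1) * altChooseSum N f (s + 1) + (N - c - s) * altChooseSum N f s := by
  simp only [altChooseSum, Nat.sum_antidiagonal_succ', mul_add, mul_sum]
  have key : ∀ x ∈ antidiagonal s,
      (-1) ^ (x.2 + 1) * ((N + 1).choose (x.2 + 1) : ℤ) * ((c + x.1) * f x.1) =
        (c + s + 1) * ((-1) ^ (x.2 + 1) * (N.choose (x.2 + 1) : ℤ) * f x.1) +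
          (N - c - s) * ((-1) ^ x.2 * (N.choose x.2 : ℤ) * f x.1) := by
    rintro ⟨r, e⟩ hx
    rw [HasAntidiagonal.mem_antidiagonal] at hx
    subst hx
    have := Nat.cast_succ_mul_choose_succ N e
    rw [Nat.choose_succ_succ']
    push_cast
    linear_combination (-1) ^ e * f r * this
  rw [sum_congr rfl key, sum_add_distrib]
  simp only [pow_zero, Nat.choose_zero_right, Nat.cast_one, mul_one, one_mul, Nat.cast_add]
  ring

lemma altChooseSum_succ_shift (N : ℕ) (f : ℕ → ℤ) (u : ℕ) :
    altChooseSum N (fun r => (r + 1) * f (r + 1)) u =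
      altChooseSum N (fun r => r * f r) (u + 1) := by
  simp [altChooseSum, Nat.sum_antidiagonal_succ]

lemma altChooseSum_one_const_one (u : ℕ) :
    altChooseSum 1 (fun _ => 1) u = if u = 0 then 1 else 0 := by
  rcases u with _ | u
  · simp [altChooseSum]
  · rw [altChooseSum, Nat.sum_antidiagonal_succ', sum_eq_single (u, 0)]
    · simp
    · rintro ⟨r, e⟩ hx h
      rw [HasAntidiagonal.mem_antidiagonal] at hx
      rcases e with _ | e
      · simp_all
      · simp [Nat.choose_eq_zero_of_lt]
    · simp

noncomputable def yCount (Y : Set ℕ) (n : ℕ) : ℕ := #{x ∈ Icc 1 n | x ∈ Y}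

section Counting
variable (Y : Set ℕ)

lemma yCount_succ (n : ℕ) : yCount Y (n + 1) = yCount Y n + if n + 1 ∈ Y then 1 else 0 := by
  simp only [yCount, card_filter]
  exact sum_Icc_succ_top (Nat.le_add_left 1 n) _

lemma betaSet_succ (n : ℕ) : (betaSet Y (n + 1) : ℤ) = n - yCount Y n := by
  have := card_filter_add_card_filter_not (s := Icc 1 n) (fun x => x ∈ Y)
  rw [Nat.card_Icc, Nat.add_sub_cancel] at this
  rw [betaSet, Ico_add_one_right_eq_Icc, yCount]
  omega

lemma alphaSet_self (n : ℕ) : alphaSet Y n n = 0 := by simp [alphaSet]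

lemma alphaSet_succ (n t : ℕ) (ht : t ≤ n) :
    alphaSet Y (n + 1) t = alphaSet Y n t + if n + 1 ∈ Y then 0 else 1 := by
  simp only [alphaSet, card_filter]
  rw [sum_Ioc_succ_top ht, ite_not]

end Counting

def IsDescentBottom (Y : Set ℕ) (w : ℕ → ℕ) (t : ℕ) : Prop :=
  0 < t ∧ w t < w (t - 1) ∧ w t ∈ Y

noncomputable def descentCount (Y : Set ℕ) (n : ℕ) (w : ℕ → ℕ) : ℕ :=
  #{t ∈ range n | IsDescentBottom Y w t}

def insertAt (p x : ℕ) (w : ℕ → ℕ) (t : ℕ) : ℕ :=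
  if t < p then w t else if t = p then x else w (t - 1)

def permWord {n : ℕ} (σ : Equiv.Perm (Fin n)) (t : ℕ) : ℕ :=
  if h : t < n then σ ⟨t, h⟩ + 1 else 0

section Words
variable (Y : Set ℕ)

lemma descentCount_succ (n : ℕ) (w : ℕ → ℕ) :
    descentCount Y (n + 1) w = descentCount Y n w + if IsDescentBottom Y w n then 1 else 0 := by
  simp only [descentCount, card_filter, sum_range_succ]

lemma descentCount_congr {n : ℕ} {w w' : ℕ → ℕ} (h : ∀ t < n, w t = w' t) :
    descentCount Y n w = descentCount Y n w' := by
  refine congrArg card (filter_congr fun t ht => ?_)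
  rw [mem_range] at ht
  simp only [IsDescentBottom, h t ht, h (t - 1) (by omega)]

lemma descentCount_insertAt {n p x : ℕ} {w : ℕ → ℕ} (hp : p ≤ n)
    (hw : ∀ t < n, w t < x) :
    descentCount Y (n + 1) (insertAt p x w) =
      descentCount Y n w + if p < n ∧ w p ∈ Y ∧ ¬IsDescentBottom Y w p then 1 else 0 := by
  induction n, hp using Nat.le_induction with
  | base =>
    have hp : ¬IsDescentBottom Y (insertAt p x w) p := by
      rintro ⟨hp, hlt, -⟩
      have := hw (p - 1) (by omega)
      simp only [insertAt, lt_irrefl, if_false, if_true, show p - 1 < p by omega] at hlt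
      omega
    rw [descentCount_succ, if_neg hp, if_neg (by omega),
      descentCount_congr Y (w' := w) fun t ht => by simp [insertAt, ht]]
  | succ n hpn ih =>
    rw [descentCount_succ, ih fun t ht => hw t (by omega), descentCount_succ]
    rcases hpn.lt_or_eq with hlt | rfl
    · have hb : IsDescentBottom Y (insertAt p x w) (n + 1) ↔ IsDescentBottom Y w n := by
        simp only [IsDescentBottom, insertAt, if_neg (show ¬n + 1 < p by omega),
          if_neg (show n + 1 ≠ p by omega), if_neg (show ¬n < p by omega),
          if_neg (show n ≠ p by omega), Nat.add_sub_cancel, Nat.succ_pos, true_and,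
          show 0 < n by omega]
      simp only [hb, hlt, show p < n + 1 by omega, true_and]
      ring
    · have hb : IsDescentBottom Y (insertAt p x w) (p + 1) ↔ w p ∈ Y := by
        simp [IsDescentBottom, insertAt, hw p (by omega)]
      by_cases hD : IsDescentBottom Y w p
      · simp [hb, hD, hD.2.2]
      · by_cases hY : w p ∈ Y <;> simp [hb, hD, hY]

lemma card_filter_not_isDescentBottom_add_descentCount (n : ℕ) (w : ℕ → ℕ) :
    #{p ∈ range n | w p ∈ Y ∧ ¬IsDescentBottom Y w p} + descentCount Y n w =
      #{p ∈ range n | w p ∈ Y} := by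
  rw [← card_filter_add_card_filter_not (s := {p ∈ range n | w p ∈ Y}) (IsDescentBottom Y w),
    filter_filter, filter_filter, descentCount, add_comm]
  congr 2
  exact filter_congr fun p _ => ⟨fun h => ⟨h.2.2, h⟩, fun h => h.2⟩

end Words

noncomputable def insertMax {n : ℕ} (p : Fin (n + 1)) (π : Equiv.Perm (Fin n)) :
    Equiv.Perm (Fin (n + 1)) :=
  (finSuccEquiv' p).trans ((Equiv.optionCongr π).trans (finSuccEquiv' (Fin.last n)).symm)

section Perms
variable {n : ℕ}

lemma insertMax_apply_self (p : Fin (n + 1)) (π : Equiv.Perm (Fin n)) :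
    insertMax p π p = Fin.last n := by
  simp [insertMax]

lemma insertMax_apply_succAbove (p : Fin (n + 1)) (π : Equiv.Perm (Fin n)) (i : Fin n) :
    insertMax p π (p.succAbove i) = (π i).castSucc := by
  simp [insertMax, Fin.succAbove_last]

lemma insertMax_bijective :
    Function.Bijective fun q : Fin (n + 1) × Equiv.Perm (Fin n) => insertMax q.1 q.2 := by
  rw [Fintype.bijective_iff_injective_and_card]
  refine ⟨?_, by simp [Fintype.card_perm, Nat.factorial_succ]⟩
  rintro ⟨p, π⟩ ⟨q, ρ⟩ h
  simp only at h
  obtain rfl : p = q := (insertMax q ρ).injective <| by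
    rw [insertMax_apply_self, ← h, insertMax_apply_self]
  have : π = ρ := Equiv.ext fun i => Fin.castSucc_injective n <| by
    rw [← insertMax_apply_succAbove, ← insertMax_apply_succAbove, h]
  rw [this]

lemma permWord_lt (π : Equiv.Perm (Fin n)) {t : ℕ} (ht : t < n) : permWord π t < n + 1 := by
  simp [permWord, ht]

lemma permWord_insertMax (p : Fin (n + 1)) (π : Equiv.Perm (Fin n)) :
    permWord (insertMax p π) = insertAt p (n + 1) (permWord π) := by
  funext t
  rcases lt_trichotomy t p with h | rfl | h
  · have hsa : p.succAbove ⟨t, by omega⟩ = ⟨t, by omega⟩ :=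
      Fin.succAbove_of_castSucc_lt _ _ h
    simp [permWord, insertAt, h, show t < n by omega, show t < n + 1 by omega, ← hsa,
      insertMax_apply_succAbove]
  · simp [permWord, insertAt, insertMax_apply_self, Fin.is_le]
  · simp only [permWord, insertAt, if_neg (show ¬t < p by omega), if_neg (show t ≠ p by omega)]
    by_cases ht : t < n + 1
    · have hsa : p.succAbove ⟨t - 1, by omega⟩ = ⟨t, ht⟩ := by
        rw [Fin.succAbove_of_le_castSucc _ _ (Fin.mk_le_mk.mpr (by dsimp only; omega))]
        ext
        simp only [Fin.succ_mk]
        omega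
      simp [ht, show t - 1 < n by omega, ← hsa, insertMax_apply_succAbove]
    · simp [ht, show ¬t - 1 < n by omega]

lemma desXY_univ_eq_descentCount (Y : Set ℕ) (σ : Equiv.Perm (Fin n)) :
    desXY Set.univ Y (fun i => (σ i : ℕ) + 1) = descentCount Y n (permWord σ) := by
  refine card_bij (fun i _ => i.1 + 1) ?_ (fun i _ j _ h => Fin.ext (by omega)) ?_
  · rintro i hi
    simp only [mem_filter, mem_univ, true_and, Set.mem_univ] at hi
    obtain ⟨h, hlt, hY⟩ := hi
    rw [mem_filter, mem_range]
    simp [IsDescentBottom, permWord, h, hY, hlt, i.2]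
  · intro t ht
    rw [mem_filter, mem_range] at ht
    obtain ⟨htn, hpos, hlt, hY⟩ := ht
    obtain ⟨t, rfl⟩ := Nat.exists_eq_add_one.mpr hpos
    refine ⟨⟨t, by omega⟩, ?_, rfl⟩
    simp only [permWord, htn, Nat.add_sub_cancel, show t < n by omega, dif_pos] at hlt hY
    simp only [mem_filter, mem_univ, true_and]
    exact ⟨htn, hlt, Set.mem_univ _, hY⟩

lemma card_filter_permWord_mem (Y : Set ℕ) (π : Equiv.Perm (Fin n)) :
    #{p ∈ range n | permWord π p ∈ Y} = yCount Y n := by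
  have hfin : ∀ i : Fin n, permWord π i = π i + 1 := fun i => by simp [permWord]
  rw [card_filter, ← Fin.sum_univ_eq_sum_range (fun p => if permWord π p ∈ Y then 1 else 0)]
  simp only [hfin]
  rw [Equiv.sum_comp π (fun i => if (i : ℕ) + 1 ∈ Y then 1 else 0),
    Fin.sum_univ_eq_sum_range (fun t => if t + 1 ∈ Y then 1 else 0), range_eq_Ico,
    sum_Ico_add' (fun x => if x ∈ Y then 1 else 0),
    yCount, card_filter, Ico_add_one_right_eq_Icc]

lemma Fin.card_filter_univ_val (m : ℕ) (P : ℕ → Prop) [DecidablePred P] :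
    #{i : Fin m | P i} = #{t ∈ range m | P t} := by
  simp only [card_filter]
  exact Fin.sum_univ_eq_sum_range (fun t => if P t then 1 else 0) m

lemma card_filter_descentCount_insertMax (Y : Set ℕ) (π : Equiv.Perm (Fin n)) (s : ℕ) :
    (#{p : Fin (n + 1) | descentCount Y (n + 1) (permWord (insertMax p π)) = s} : ℤ) =
      (if descentCount Y n (permWord π) = s then (n + 1 - yCount Y n + s : ℤ) else 0) +
        if descentCount Y n (permWord π) + 1 = s then (yCount Y n + 1 - s : ℤ) else 0 := by
  set w := permWord π
  set d := descentCount Y n w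
  set F : ℕ → Prop := fun p => p < n ∧ w p ∈ Y ∧ ¬IsDescentBottom Y w p
  have hins : ∀ p : Fin (n + 1),
      descentCount Y (n + 1) (permWord (insertMax p π)) = d + if F p then 1 else 0 := fun p => by
    rw [permWord_insertMax, descentCount_insertAt Y (Fin.is_le p) fun t => permWord_lt π]
  have hF : #{p ∈ range (n + 1) | F p} + d = yCount Y n := by
    rw [← card_filter_permWord_mem Y π, ← card_filter_not_isDescentBottom_add_descentCount,
      range_add_one, filter_insert, if_neg fun h => (lt_irrefl n h.1)]
    congr 2
    exact filter_congr fun p hp => by simp [F, w, mem_range.mp hp]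
  have hnotF : #{p ∈ range (n + 1) | F p} + #{p ∈ range (n + 1) | ¬F p} = n + 1 := by
    rw [card_filter_add_card_filter_not, card_range]
  simp only [hins, Fin.card_filter_univ_val (n + 1) (fun p => d + (if F p then 1 else 0) = s)]
  by_cases h1 : d = s
  · rw [if_pos h1, if_neg (by omega), add_zero]
    have hset : {p ∈ range (n + 1) | d + (if F p then 1 else 0) = s} =
        {p ∈ range (n + 1) | ¬F p} :=
      filter_congr fun p _ => by split_ifs <;> simp_all
    rw [hset]
    omega
  · rw [if_neg h1]
    by_cases h2 : d + 1 = s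
    · have hset : {p ∈ range (n + 1) | d + (if F p then 1 else 0) = s} =
          {p ∈ range (n + 1) | F p} :=
        filter_congr fun p _ => by split_ifs <;> simp_all
      rw [if_pos h2, hset]
      omega
    · rw [if_neg h2, add_zero, Nat.cast_eq_zero, card_eq_zero, filter_eq_empty_iff]
      intro p _
      split_ifs <;> omega

end Perms

section Recursion
variable (Y : Set ℕ)

lemma permCount_univ_eq_card (n s : ℕ) :
    permCount Set.univ Y n s = #{π : Equiv.Perm (Fin n) | descentCount Y n (permWord π) = s} := by
  simp only [permCount, desXY_univ_eq_descentCount]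

lemma permCount_univ_zero (s : ℕ) : permCount Set.univ Y 0 s = if s = 0 then 1 else 0 := by
  rw [permCount_univ_eq_card]
  split_ifs with hs <;> simp [descentCount, hs, eq_comm]

lemma permCount_univ_succ_eq_sum (n s : ℕ) :
    (permCount Set.univ Y (n + 1) s : ℤ) = ∑ π : Equiv.Perm (Fin n),
      ((if descentCount Y n (permWord π) = s then (n + 1 - yCount Y n + s : ℤ) else 0) +
        if descentCount Y n (permWord π) + 1 = s then (yCount Y n + 1 - s : ℤ) else 0) := by
  rw [permCount_univ_eq_card, ← card_equiv (Equiv.ofBijective _ insertMax_bijective)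
    (s := {q | descentCount Y (n + 1) (permWord (insertMax q.1 q.2)) = s}) (by simp),
    card_filter, Fintype.sum_prod_type_right]
  push_cast
  refine sum_congr rfl fun π _ => ?_
  rw [← card_filter_descentCount_insertMax, card_filter]
  push_cast
  rfl

lemma permCount_univ_succ_zero (n : ℕ) :
    (permCount Set.univ Y (n + 1) 0 : ℤ) = (n + 1 - yCount Y n) * permCount Set.univ Y n 0 := by
  rw [permCount_univ_succ_eq_sum, permCount_univ_eq_card]
  simp only [Nat.add_one_ne_zero, if_false, add_zero, ← sum_filter, sum_const, nsmul_eq_mul,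
    Nat.cast_zero]
  ring

lemma permCount_univ_succ_succ (n s : ℕ) :
    (permCount Set.univ Y (n + 1) (s + 1) : ℤ) =
      (n + 1 - yCount Y n + (s + 1)) * permCount Set.univ Y n (s + 1) +
        (yCount Y n - s) * permCount Set.univ Y n s := by
  rw [permCount_univ_succ_eq_sum, permCount_univ_eq_card, permCount_univ_eq_card, sum_add_distrib]
  simp only [Nat.add_right_cancel_iff, ← sum_filter, sum_const, nsmul_eq_mul]
  push_cast
  ring

end Recursion

noncomputable def betaProd (Y : Set ℕ) (n r : ℕ) : ℤ :=
  ∏ t ∈ Icc 1 n, (1 + r + betaSet Y t : ℤ)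

noncomputable def alphaProd (Y : Set ℕ) (n r : ℕ) : ℤ :=
  ∏ t ∈ Icc 1 n, ((r : ℤ) + (if t ∈ Y then 0 else 1) + alphaSet Y n t)

/-- The coefficient of `t ^ u` in `t ^ K * F_n (1 / t)`, where `K = yCount Y n`. -/
noncomputable def reflectedCount (Y : Set ℕ) (n u : ℕ) : ℤ :=
  if u ≤ yCount Y n then permCount Set.univ Y n (yCount Y n - u) else 0

section Formulas
variable (Y : Set ℕ)

lemma betaProd_zero (r : ℕ) : betaProd Y 0 r = 1 := by simp [betaProd]

lemma betaProd_succ (n r : ℕ) :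
    betaProd Y (n + 1) r = (n + 1 - yCount Y n + r) * betaProd Y n r := by
  rw [betaProd, prod_Icc_succ_top (Nat.le_add_left 1 n), betaSet_succ, ← betaProd]
  ring

lemma alphaProd_zero (r : ℕ) : alphaProd Y 0 r = 1 := by simp [alphaProd]

lemma alphaProd_succ (n r : ℕ) :
    alphaProd Y (n + 1) r =
      if n + 1 ∈ Y then r * alphaProd Y n r else (r + 1) * alphaProd Y n (r + 1) := by
  have hα : ∀ t ∈ Icc 1 n, ((r : ℤ) + (if t ∈ Y then 0 else 1) + alphaSet Y (n + 1) t) =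
      ((r + if n + 1 ∈ Y then 0 else 1 : ℕ) : ℤ) + (if t ∈ Y then 0 else 1) +
        alphaSet Y n t := by
    intro t ht
    rw [alphaSet_succ Y n t (mem_Icc.mp ht).2]
    push_cast
    ring
  rw [alphaProd, prod_Icc_succ_top (Nat.le_add_left 1 n), alphaSet_self, prod_congr rfl hα,
    ← alphaProd]
  split_ifs <;> simp only [add_zero, Nat.cast_zero] <;> ring

theorem permCount_univ_eq_altChooseSum_betaProd (n s : ℕ) :
    (permCount Set.univ Y n s : ℤ) = altChooseSum (n + 1) (betaProd Y n) s := by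
  induction n generalizing s with
  | zero =>
    rw [show betaProd Y 0 = fun _ => 1 from funext (betaProd_zero Y), altChooseSum_one_const_one,
      permCount_univ_zero]
    push_cast
    rfl
  | succ n ih =>
    have hβ : betaProd Y (n + 1) = fun r => ((n + 1 - yCount Y n : ℤ) + r) * betaProd Y n r :=
      funext (betaProd_succ Y n)
    rw [hβ]
    rcases s with _ | s
    · rw [permCount_univ_succ_zero, ih, altChooseSum_zero, altChooseSum_zero]
      ring
    · rw [permCount_univ_succ_succ, ih, ih, altChooseSum_succ_mul]
      push_cast
      ring

lemma permCount_univ_eq_zero_of_lt {n s : ℕ} (h : yCount Y n < s) :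
    permCount Set.univ Y n s = 0 := by
  induction n generalizing s with
  | zero =>
    rw [permCount_univ_zero, if_neg (by simp_all [yCount]; omega)]
  | succ n ih =>
    obtain ⟨s, rfl⟩ : ∃ s', s = s' + 1 := Nat.exists_eq_add_one.mpr (by omega)
    have hK := yCount_succ Y n
    have h1 : permCount Set.univ Y n (s + 1) = 0 := ih (by split_ifs at hK <;> omega)
    have h2 : ((yCount Y n : ℤ) - s) * permCount Set.univ Y n s = 0 := by
      rcases (by split_ifs at hK <;> omega : yCount Y n < s ∨ yCount Y n = s) with h | h
      · simp [ih h]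
      · simp [h]
    have := permCount_univ_succ_succ Y n s
    rw [h1, h2, Nat.cast_zero, mul_zero, zero_add] at this
    exact_mod_cast this

lemma permCount_univ_succ_yCount_succ (n : ℕ) :
    permCount Set.univ Y (n + 1) (yCount Y n + 1) = 0 := by
  have := permCount_univ_succ_succ Y n (yCount Y n)
  rw [permCount_univ_eq_zero_of_lt Y (Nat.lt_succ_self _), sub_self, Nat.cast_zero, mul_zero,
    zero_mul, add_zero] at this
  exact_mod_cast this

lemma reflectedCount_succ (n u : ℕ) :
    reflectedCount Y (n + 1) (u + if n + 1 ∈ Y then 1 else 0) =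
      (u + 1) * reflectedCount Y n (u + 1) + (n + 1 - u) * reflectedCount Y n u := by
  simp only [reflectedCount, yCount_succ, Nat.add_le_add_iff_right, Nat.add_sub_add_right]
  split_ifs with h1 h2 h2
  · obtain ⟨v, hv⟩ : ∃ v, yCount Y n - u = v + 1 := Nat.exists_eq_add_one.mpr (by omega)
    have hv' : (yCount Y n : ℤ) - u = v + 1 := by omega
    rw [hv, permCount_univ_succ_succ, show yCount Y n - (u + 1) = v by omega]
    linear_combination (permCount Set.univ Y n v - permCount Set.univ Y n (v + 1) : ℤ) * hv'
  · rw [show yCount Y n - u = 0 by omega, permCount_univ_succ_zero,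
      show (u : ℤ) = yCount Y n by omega]
    ring
  · omega
  · simp

theorem altChooseSum_alphaProd (n u : ℕ) :
    altChooseSum (n + 1) (alphaProd Y n) u = reflectedCount Y n u := by
  induction n generalizing u with
  | zero =>
    rw [show alphaProd Y 0 = fun _ => 1 from funext (alphaProd_zero Y),
      altChooseSum_one_const_one]
    simp [reflectedCount, yCount, permCount_univ_zero]
  | succ n ih =>
    have hα := funext (alphaProd_succ Y n)
    have hrec := reflectedCount_succ Y n
    have hmul := altChooseSum_succ_mul (n + 1) 0 (alphaProd Y n)
    simp only [zero_add, sub_zero, Nat.cast_add, Nat.cast_one] at hmul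
    by_cases hY : n + 1 ∈ Y
    · simp only [hY, if_true] at hα hrec
      rw [hα]
      rcases u with _ | u
      · rw [altChooseSum_zero, reflectedCount, yCount_succ]
        simp [hY, permCount_univ_succ_yCount_succ]
      · rw [hmul, ih, ih, hrec]
    · simp only [hY, if_false, add_zero] at hα hrec
      rw [hα, altChooseSum_succ_shift, hmul, ih, ih, hrec]

theorem permCount_univ_eq_altChooseSum_alphaProd {n s : ℕ} (hs : s ≤ yCount Y n) :
    (permCount Set.univ Y n s : ℤ) = altChooseSum (n + 1) (alphaProd Y n) (yCount Y n - s) := by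
  rw [altChooseSum_alphaProd, reflectedCount, if_pos (Nat.sub_le _ _), Nat.sub_sub_self hs]

end Formulas

theorem Nat.mul_add_induction {k : ℕ} {P : ℕ → ∀ j : ℕ, j < k → Prop}
    (zero : ∀ h, P 0 0 h)
    (succ : ∀ m j h, P m j (Nat.lt_of_succ_lt h) → P m (j + 1) h)
    (wrap : ∀ m h, P m (k - 1) (Nat.sub_one_lt_of_lt h) → P (m + 1) 0 h)
    (m j : ℕ) (hj : j < k) : P m j hj := by
  have along : ∀ m (h : 0 < k), P m 0 h → ∀ j (hj : j < k), P m j hj := by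
    intro m h h0 j hj
    induction j with
    | zero => exact h0
    | succ j ih => exact succ m j hj (ih _)
  induction m generalizing j with
  | zero => exact along 0 (by omega) (zero _) j hj
  | succ m ih => exact along (m + 1) (by omega) (wrap m (by omega) (ih _ _)) j hj

section Multiples
variable {k : ℕ} (hk : 0 < k)
include hk

lemma mul_add_add_one_notMem_multiples {m j : ℕ} (hj : j + 1 < k) :
    k * m + j + 1 ∉ {x : ℕ | ∃ i, 1 ≤ i ∧ x = k * i} := by
  rintro ⟨i, -, hi⟩
  have h1 : m < i := (Nat.mul_lt_mul_left hk).mp (by omega)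
  have h2 : i < m + 1 := (Nat.mul_lt_mul_left hk).mp (by rw [mul_add, mul_one]; omega)
  omega

lemma mul_add_sub_one_add_one (m : ℕ) : k * m + (k - 1) + 1 = k * (m + 1) + 0 := by
  rw [mul_add, mul_one]
  omega

lemma yCount_multiples (m : ℕ) {j : ℕ} (hj : j < k) :
    yCount {x : ℕ | ∃ i, 1 ≤ i ∧ x = k * i} (k * m + j) = m := by
  induction m, j, hj using Nat.mul_add_induction with
  | zero => simp [yCount]
  | succ m j hj ih =>
    rw [← add_assoc, yCount_succ, ih, if_neg (mul_add_add_one_notMem_multiples hk hj), add_zero]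
  | wrap m _ ih =>
    rw [← mul_add_sub_one_add_one hk, yCount_succ, ih, mul_add_sub_one_add_one hk,
      if_pos ⟨m + 1, by omega, rfl⟩]

lemma betaProd_multiples (m : ℕ) {j : ℕ} (hj : j < k) (r : ℕ) :
    betaProd {x : ℕ | ∃ i, 1 ≤ i ∧ x = k * i} (k * m + j) r =
      (r + 1).ascFactorial ((k - 1) * m + j) *
        ∏ i ∈ Icc 1 m, (1 + r + ((k : ℤ) - 1) * i) := by
  induction m, j, hj using Nat.mul_add_induction generalizing r with
  | zero => simp [betaProd]
  | succ m j hj ih =>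
    rw [← add_assoc, betaProd_succ, ih, yCount_multiples hk m (by omega), ← add_assoc,
      Nat.ascFactorial_succ]
    push_cast [Nat.cast_sub hk]
    ring
  | wrap m _ ih =>
    rw [← mul_add_sub_one_add_one hk, betaProd_succ, ih, yCount_multiples hk m (by omega),
      prod_Icc_succ_top (Nat.le_add_left 1 m),
      show (k - 1) * (m + 1) + 0 = (k - 1) * m + (k - 1) by ring]
    push_cast [Nat.cast_sub hk]
    ring

lemma alphaProd_multiples (m : ℕ) {j : ℕ} (hj : j < k) (r : ℕ) :
    alphaProd {x : ℕ | ∃ i, 1 ≤ i ∧ x = k * i} (k * m + j) r =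
      (r + 1).ascFactorial ((k - 1) * m + j) *
        ∏ i ∈ range m, ((r : ℤ) + j + ((k : ℤ) - 1) * i) := by
  induction m, j, hj using Nat.mul_add_induction generalizing r with
  | zero => simp [alphaProd]
  | succ m j hj ih =>
    have hshift : ∀ i ∈ range m, ((r + 1 : ℕ) : ℤ) + j + ((k : ℤ) - 1) * i =
        r + (j + 1 : ℕ) + ((k : ℤ) - 1) * i := fun i _ => by push_cast; ring
    rw [← add_assoc, alphaProd_succ, if_neg (mul_add_add_one_notMem_multiples hk hj), ih,
      prod_congr rfl hshift, ← add_assoc, Nat.ascFactorial_succ, ← Nat.succ_ascFactorial]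
    push_cast
    ring
  | wrap m _ ih =>
    have hshift : ∀ i ∈ range m, (r : ℤ) + (k - 1 : ℕ) + ((k : ℤ) - 1) * i =
        r + (0 : ℕ) + ((k : ℤ) - 1) * (i + 1 : ℕ) := fun i _ => by
      push_cast [Nat.cast_sub hk]
      ring
    rw [← mul_add_sub_one_add_one hk, alphaProd_succ, mul_add_sub_one_add_one hk,
      if_pos ⟨m + 1, by omega, rfl⟩, ih, prod_congr rfl hshift, prod_range_succ' _ m,
      show (k - 1) * (m + 1) + 0 = (k - 1) * m + (k - 1) by ring]
    push_cast
    ring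

end Multiples

lemma Nat.ascFactorial_succ_eq_factorial_mul_choose (r A : ℕ) :
    (r + 1).ascFactorial A = A.factorial * (A + r).choose r := by
  rw [Nat.ascFactorial_eq_factorial_mul_choose, add_comm r A, Nat.choose_symm_add]

theorem stmt10 (k : ℕ) (hk : 1 ≤ k) (m j s : ℕ) (hj : j ≤ k - 1) :
    (permCount Set.univ {x : ℕ | ∃ i, 1 ≤ i ∧ x = k * i} (k * m + j) s : ℤ) =
      (Nat.factorial ((k - 1) * m + j) : ℤ) *
        ∑ r ∈ Finset.range (s + 1),
          (-1) ^ (s - r) * (Nat.choose ((k - 1) * m + j + r) r : ℤ) *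
            (Nat.choose (k * m + j + 1) (s - r) : ℤ) *
            ∏ i ∈ Finset.Icc 1 m, (1 + (r : ℤ) + ((k : ℤ) - 1) * i) ∧
    (permCount Set.univ {x : ℕ | ∃ i, 1 ≤ i ∧ x = k * i} (k * m + j) s : ℤ) =
      (Nat.factorial ((k - 1) * m + j) : ℤ) *
        ∑ r ∈ Finset.range (m + 1 - s),
          (-1) ^ (m - s - r) * (Nat.choose ((k - 1) * m + j + r) r : ℤ) *
            (Nat.choose (k * m + j + 1) (m - s - r) : ℤ) *
            ∏ i ∈ Finset.range m, ((r : ℤ) + (j : ℤ) + ((k : ℤ) - 1) * i) := by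
  have hjk : j < k := by omega
  have hK := yCount_multiples hk m hjk
  constructor
  · rw [permCount_univ_eq_altChooseSum_betaProd, altChooseSum_eq_sum_range, mul_sum]
    refine sum_congr rfl fun r _ => ?_
    rw [betaProd_multiples hk m hjk, Nat.ascFactorial_succ_eq_factorial_mul_choose]
    push_cast
    ring
  · rcases le_or_gt s m with hs | hs
    · rw [permCount_univ_eq_altChooseSum_alphaProd _ (by rw [hK]; exact hs), hK,
        altChooseSum_eq_sum_range, mul_sum, show m - s + 1 = m + 1 - s by omega]
      refine sum_congr rfl fun r _ => ?_
      rw [alphaProd_multiples hk m hjk, Nat.ascFactorial_succ_eq_factorial_mul_choose]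
      push_cast
      ring
    · rw [permCount_univ_eq_zero_of_lt _ (by rw [hK]; exact hs), show m + 1 - s = 0 by omega]
      simp
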